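/- Let p > q ≥ 1 be coprime integers and let u ∈ L_{p/q} be nonempty. For every natural number l, the last letter α_{l+1} of wmin_{p/q}(u,l+1) is the unique integer α in {0,…,q−1} such that q divides p·val_{p/q}(u·wmin_{p/q}(u,l)) + α; equivalently, α_{l+1} is the remainder modulo q of −p·val_{p/q}(u·wmin_{p/q}(u,l)). -/

import Mathlib

/-- The valuation in base `p/q` of a digit word (most significant digit first):
`val_{p/q}(a_k ⋯ a_0) = (1/q) ∑ a_i (p/q)^i`, with `val(ε) = 0`. -/
def ratVal (p q : ℕ) (w : List ℕ) : ℚ :=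
  w.foldl (fun x a => (p : ℚ) / q * x + (a : ℚ) / q) 0

/-- Membership in the language `L_{p/q}`: all letters lie in `{0,…,p-1}`, the valuation
is a nonnegative integer, and the word is empty or has nonzero leading digit. -/
def InLang (p q : ℕ) (w : List ℕ) : Prop :=
  (∀ a ∈ w, a < p) ∧ (∃ n : ℕ, ratVal p q w = n) ∧ w.head? ≠ some 0

/-- `v` is the lexicographically least word of length `l` over `{0,…,p-1}`
such that `u ++ v ∈ L_{p/q}`. -/
def IsWmin (p q : ℕ) (u : List ℕ) (l : ℕ) (v : List ℕ) : Prop :=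
  v.length = l ∧ InLang p q (u ++ v) ∧
    ∀ v' : List ℕ, v'.length = l → InLang p q (u ++ v') →
      ¬ List.Lex (· < · : ℕ → ℕ → Prop) v' v

/-- `v` is the lexicographically greatest word of length `l` over `{0,…,p-1}`
such that `u ++ v ∈ L_{p/q}`. -/
def IsWmax (p q : ℕ) (u : List ℕ) (l : ℕ) (v : List ℕ) : Prop :=
  v.length = l ∧ InLang p q (u ++ v) ∧
    ∀ v' : List ℕ, v'.length = l → InLang p q (u ++ v') →
      ¬ List.Lex (· < · : ℕ → ℕ → Prop) v v'

lemma ratVal_concat (p q : ℕ) (w : List ℕ) (a : ℕ) :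
    ratVal p q (w ++ [a]) = (p : ℚ) / q * ratVal p q w + (a : ℚ) / q := by
  simp [ratVal, List.foldl_append]

/-- The valuation times `q^length` is a natural number. -/
lemma ratVal_mul_pow (p q : ℕ) (hq : 1 ≤ q) (w : List ℕ) :
    ∃ t : ℕ, ratVal p q w * (q : ℚ) ^ w.length = t := by
  have hq0 : (q : ℚ) ≠ 0 := by positivity
  induction w using List.reverseRecOn with
  | nil => exact ⟨0, by simp [ratVal]⟩
  | append_singleton w a ih =>
      obtain ⟨t, ht⟩ := ih
      refine ⟨p * t + a * q ^ w.length, ?_⟩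
      rw [ratVal_concat]
      push_cast
      rw [List.length_append, List.length_singleton]
      field_simp
      rw [← ht]
      ring

lemma ratVal_nonneg (p q : ℕ) (hq : 1 ≤ q) (w : List ℕ) : 0 ≤ ratVal p q w := by
  obtain ⟨t, ht⟩ := ratVal_mul_pow p q hq w
  have hq0 : (0:ℚ) < (q : ℚ) ^ w.length := by positivity
  nlinarith [ht, Nat.cast_nonneg (α := ℚ) t]

/-- Key lemma: if `x ++ [a]` has integer valuation `n` then `x` has integer
valuation `N` with `p*N + a = q*n`. -/
lemma prefix_int (p q : ℕ) (hq : 1 ≤ q) (hco : Nat.Coprime p q)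
    (x : List ℕ) (a n : ℕ) (h : ratVal p q (x ++ [a]) = n) :
    ∃ N : ℕ, ratVal p q x = N ∧ p * N + a = q * n := by
  have hq0 : (q : ℚ) ≠ 0 := by positivity
  obtain ⟨t, ht⟩ := ratVal_mul_pow p q hq x
  set L := x.length with hL
  rw [ratVal_concat] at h
  have e1 : (p:ℚ) * ratVal p q x + a = n * q := by
    field_simp at h
    linarith
  have e2 : ((p * t + a * q ^ L : ℕ) : ℚ) = ((n * q ^ (L + 1) : ℕ) : ℚ) := by
    push_cast
    have e := congrArg (fun y => y * (q:ℚ) ^ L) e1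
    linear_combination e - (p:ℚ) * ht
  have keyN : p * t + a * q ^ L = n * q ^ (L + 1) := Nat.cast_injective e2
  have hdvd : q ^ L ∣ p * t := by
    have h1 : q ^ L ∣ n * q ^ (L + 1) := ⟨n * q, by rw [pow_succ]; ring⟩
    have h2 : q ^ L ∣ a * q ^ L := ⟨a, by ring⟩
    have h3 : p * t = n * q ^ (L + 1) - a * q ^ L := by omega
    rw [h3]
    exact Nat.dvd_sub h1 h2
  have hcop : Nat.Coprime (q ^ L) p := (hco.pow_right L).symm
  obtain ⟨N, hN⟩ := Nat.Coprime.dvd_of_dvd_mul_left hcop hdvd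
  have hqL : (0:ℚ) < (q : ℚ) ^ L := by positivity
  refine ⟨N, ?_, ?_⟩
  · have h5 : ratVal p q x * (q:ℚ) ^ L = (N : ℚ) * (q:ℚ) ^ L := by
      rw [ht, hN]; push_cast; ring
    exact mul_right_cancel₀ (ne_of_gt hqL) h5
  · have k : ((p:ℤ)) * ((q:ℤ) ^ L * N) + a * q ^ L = n * q ^ (L + 1) := by
      exact_mod_cast (hN ▸ keyN)
    have h6 : ((p:ℤ) * N + a) * (q:ℤ) ^ L = ((q:ℤ) * n) * (q:ℤ) ^ L := by
      linear_combination k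
    have h7 : (p:ℤ) * N + a = (q:ℤ) * n :=
      mul_right_cancel₀ (by positivity) h6
    exact_mod_cast h7

/-- Lex is preserved by appending when lengths are equal. -/
lemma lex_append {l₁ l₂ : List ℕ} (h : List.Lex (· < · : ℕ → ℕ → Prop) l₁ l₂)
    (hl : l₁.length = l₂.length) (s t : List ℕ) :
    List.Lex (· < · : ℕ → ℕ → Prop) (l₁ ++ s) (l₂ ++ t) := by
  induction h with
  | nil => simp at hl
  | @cons a l₁' l₂' h ih =>
      exact List.Lex.cons (ih (by simpa using hl))
  | rel h => exact List.Lex.rel h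

lemma lex_snoc (v : List ℕ) {α a : ℕ} (h : α < a) :
    List.Lex (· < · : ℕ → ℕ → Prop) (v ++ [α]) (v ++ [a]) := by
  induction v with
  | nil => exact List.Lex.rel h
  | cons b v ih => exact List.Lex.cons ih

lemma lex_trichotomy (l₁ l₂ : List ℕ) :
    List.Lex (· < · : ℕ → ℕ → Prop) l₁ l₂ ∨ l₁ = l₂ ∨
      List.Lex (· < · : ℕ → ℕ → Prop) l₂ l₁ := by
  induction l₁ generalizing l₂ with
  | nil =>
      cases l₂ with
      | nil => exact Or.inr (Or.inl rfl)
      | cons b t => exact Or.inl List.Lex.nil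
  | cons a s ih =>
      cases l₂ with
      | nil => exact Or.inr (Or.inr List.Lex.nil)
      | cons b t =>
          rcases lt_trichotomy a b with h | h | h
          · exact Or.inl (List.Lex.rel h)
          · subst h
            rcases ih t with h' | h' | h'
            · exact Or.inl (List.Lex.cons h')
            · exact Or.inr (Or.inl (by rw [h']))
            · exact Or.inr (Or.inr (List.Lex.cons h'))
          · exact Or.inr (Or.inr (List.Lex.rel h))

lemma head?_append_of_ne_nil (u t : List ℕ) (h : u ≠ []) :
    (u ++ t).head? = u.head? := by
  cases u with
  | nil => exact absurd rfl h
  | cons a u => simp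

/-- For coprime `p > q ≥ 1`, a nonempty seed `u ∈ L_{p/q}`, and `l ∈ ℕ`: the last letter of
`wmin_{p/q}(u,l+1)` is the unique `α ∈ {0,…,q-1}` with `q ∣ p·val_{p/q}(u·wmin_{p/q}(u,l)) + α`;
equivalently, it is the remainder mod `q` of `-p·val_{p/q}(u·wmin_{p/q}(u,l))`. -/
theorem stmt4 (p q : ℕ) (hq : 1 ≤ q) (hpq : q < p) (hco : Nat.Coprime p q)
    (u : List ℕ) (hu : InLang p q u) (hne : u ≠ []) (l : ℕ)
    (v w : List ℕ) (hv : IsWmin p q u l v) (hw : IsWmin p q u (l + 1) w)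
    (m : ℤ) (hm : (m : ℚ) = (p : ℚ) * ratVal p q (u ++ v)) :
    (∀ α : ℕ, α < q → ((q : ℤ) ∣ m + (α : ℤ) ↔ w.getLast? = some α)) ∧
    w.getLast? = some ((-m % (q : ℤ)).toNat) := by
  obtain ⟨hvl, ⟨hvd, ⟨N0, hN0⟩, hvh⟩, hvmin⟩ := hv
  obtain ⟨hwl, ⟨hwd, ⟨n1, hn1⟩, hwh⟩, hwmin⟩ := hw
  have hqZ : (0:ℤ) < (q:ℤ) := by exact_mod_cast hq
  -- m = p * N0
  have hmN0 : m = (p : ℤ) * N0 := by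
    have : (m : ℚ) = ((p : ℤ) * N0 : ℤ) := by rw [hm, hN0]; push_cast; ring
    exact_mod_cast this
  -- define α
  set α : ℕ := ((-m) % (q:ℤ)).toNat with hα
  have hαcast : (α : ℤ) = (-m) % (q:ℤ) :=
    Int.toNat_of_nonneg (Int.emod_nonneg _ (by omega))
  have hαlt : α < q := by
    have := Int.emod_lt_of_pos (-m) hqZ
    omega
  have hdvdα : (q:ℤ) ∣ m + (α:ℤ) := by
    refine ⟨-((-m) / q), ?_⟩
    rw [hαcast, Int.emod_def]
    ring
  -- the candidate word v ++ [α] is in the language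
  have hqQ : (q : ℚ) ≠ 0 := by positivity
  have hcand : InLang p q (u ++ (v ++ [α])) := by
    refine ⟨?_, ?_, ?_⟩
    · intro b hb
      rw [← List.append_assoc] at hb
      rcases List.mem_append.1 hb with hb' | hb'
      · exact hvd b hb'
      · have : b = α := List.mem_singleton.1 hb'
        omega
    · obtain ⟨k, hk⟩ := hdvdα
      have hm0 : 0 ≤ m := by rw [hmN0]; positivity
      have hqk0 : (0:ℤ) ≤ (q:ℤ) * k := by
        rw [← hk]; positivity
      have hk0 : 0 ≤ k := by nlinarith
      refine ⟨k.toNat, ?_⟩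
      rw [← List.append_assoc, ratVal_concat, hN0]
      have hkQ : (m:ℚ) + (α:ℚ) = (q:ℚ) * (k:ℚ) := by exact_mod_cast hk
      have hmQ : (m:ℚ) = (p:ℚ) * (N0:ℚ) := by exact_mod_cast hmN0
      have hcast : ((k.toNat : ℕ) : ℚ) = (k : ℚ) := by
        exact_mod_cast congrArg (Int.cast : ℤ → ℚ) (Int.toNat_of_nonneg hk0)
      rw [hcast]
      field_simp
      linarith [hkQ, hmQ]
    · rw [head?_append_of_ne_nil u _ hne]
      rwa [head?_append_of_ne_nil u _ hne] at hvh
  -- minimality of w against the candidate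
  have hnotlex : ¬ List.Lex (· < · : ℕ → ℕ → Prop) (v ++ [α]) w :=
    hwmin (v ++ [α]) (by simp [hvl]) hcand
  -- decompose w as w' ++ [a]
  have hwne : w ≠ [] := by intro h; rw [h] at hwl; simp at hwl
  obtain ⟨w', a, hwa⟩ := (List.eq_nil_or_concat w).resolve_left hwne
  rw [List.concat_eq_append] at hwa
  subst hwa
  have hw'l : w'.length = l := by simpa using hwl
  -- u ++ w' has integer valuation
  have hn1' : ratVal p q ((u ++ w') ++ [a]) = n1 := by
    rw [List.append_assoc]; exact hn1
  obtain ⟨N, hNval, hNeq⟩ := prefix_int p q hq hco (u ++ w') a n1 hn1'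
  have hw'lang : InLang p q (u ++ w') := by
    refine ⟨?_, ⟨N, hNval⟩, ?_⟩
    · intro b hb
      exact hwd b (by simp only [List.mem_append] at hb ⊢; tauto)
    · rw [head?_append_of_ne_nil u _ hne]
      rwa [head?_append_of_ne_nil u _ hne] at hwh
  have hnotlex' : ¬ List.Lex (· < · : ℕ → ℕ → Prop) w' v := hvmin w' hw'l hw'lang
  -- w' = v
  have hw'v : w' = v := by
    rcases lex_trichotomy w' v with h | h | h
    · exact absurd h hnotlex'
    · exact h
    · exact absurd (lex_append h (by rw [hvl, hw'l]) [α] [a]) hnotlex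
  subst hw'v
  -- a ≤ α
  have haα : a ≤ α := by
    by_contra hc
    exact hnotlex (lex_snoc w' (by omega))
  -- q divides m + a
  have hNN0 : N = N0 := by
    have : (N : ℚ) = (N0 : ℚ) := by rw [← hNval, hN0]
    exact_mod_cast this
  have hdvda : (q:ℤ) ∣ m + (a:ℤ) := by
    refine ⟨(n1 : ℤ), ?_⟩
    have : (p * N + a : ℤ) = (q * n1 : ℤ) := by exact_mod_cast hNeq
    rw [hmN0, ← hNN0]
    push_cast
    push_cast at this
    linarith
  -- a = α
  have haeq : a = α := by
    have hd : (q:ℤ) ∣ (α : ℤ) - (a : ℤ) := by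
      have := dvd_sub hdvdα hdvda
      simpa using this
    have hd' : q ∣ α - a := by
      have hc : ((α - a : ℕ) : ℤ) = (α:ℤ) - a := by omega
      exact_mod_cast hc ▸ hd
    have h0 := Nat.eq_zero_of_dvd_of_lt hd' (by omega)
    omega
  have hlast : (w' ++ [a]).getLast? = some α := by simp [haeq]
  refine ⟨?_, hlast⟩
  intro α' hα'
  constructor
  · intro hdvd'
    have hd : (q:ℤ) ∣ (α' : ℤ) - (α : ℤ) := by
      have := dvd_sub hdvd' hdvdα
      simpa using this
    have : α' = α := by
      rcases le_or_gt α α' with h | h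
      · have hd' : q ∣ α' - α := by
          have hc : ((α' - α : ℕ) : ℤ) = (α':ℤ) - α := by omega
          exact_mod_cast hc ▸ hd
        have h0 := Nat.eq_zero_of_dvd_of_lt hd' (by omega)
        omega
      · have hd2 : (q:ℤ) ∣ (α : ℤ) - (α' : ℤ) := by
          have := dvd_neg.2 hd
          simpa using this
        have hd' : q ∣ α - α' := by
          have hc : ((α - α' : ℕ) : ℤ) = (α:ℤ) - α' := by omega
          exact_mod_cast hc ▸ hd2
        have h0 := Nat.eq_zero_of_dvd_of_lt hd' (by omega)
        omega
    rw [hlast, this]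
  · intro h
    have : α' = α := by
      rw [hlast] at h
      exact (Option.some_injective _ h).symm
    rw [this]
    exact hdvdα
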